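/- For all schemas S₁ and S₂ (not only predicate-free ones), every interpretation i over a domain D, and every state d ≠ ⊥: if M[S₁]^i_d ≠ ⊥ then M[S₁S₂]^i_d = M[S₂]^i_{M[S₁]^i_d} and π(S₁S₂, i, d) = π(S₁, i, d) · π(S₂, i, M[S₁]^i_d); and if M[S₁]^i_d = ⊥ then M[S₁S₂]^i_d = ⊥ and π(S₁S₂, i, d) = π(S₁, i, d). -/

import Mathlib

namespace SchemaSlicing

/- Function symbols, predicate symbols, variables and labels are drawn from
   fixed infinite sets; we model each by ℕ. Arities are implicit: each
   occurrence of a symbol carries the list of its arguments. -/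
abbrev Var := ℕ
abbrev Fn := ℕ
abbrev Pn := ℕ
abbrev Label := ℕ

/-- Structured program schemas. `loop` is the while-construct. -/
inductive Schema : Type where
  | skip : Schema
  | label : Label → Schema
  | assign : Var → Fn → List Var → Schema
  | seq : Schema → Schema → Schema
  | ite : Pn → List Var → Schema → Schema → Schema
  | loop : Pn → List Var → Schema → Schema
  deriving DecidableEq

/-- Letters of the alphabet L(S): labels, assignment letters ⟨y:=f(x)⟩ and
    predicate letters ⟨p(x),Z⟩. -/
inductive Letter : Type where
  | lab : Label → Letter
  | asgn : Var → Fn → List Var → Letter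
  | pred : Pn → List Var → Bool → Letter
  deriving DecidableEq

/-- Symbols: function symbols, predicate symbols and labels. -/
inductive Sym : Type where
  | fn : Fn → Sym
  | pn : Pn → Sym
  | lab : Label → Sym
  deriving DecidableEq

/-- The list of occurrences of function symbols, predicate symbols and labels in a schema. -/
def Schema.syms : Schema → List Sym
  | .skip => []
  | .label l => [Sym.lab l]
  | .assign _ f _ => [Sym.fn f]
  | .seq S₁ S₂ => S₁.syms ++ S₂.syms
  | .ite p _ S₁ S₂ => Sym.pn p :: (S₁.syms ++ S₂.syms)
  | .loop q _ T => Sym.pn q :: T.syms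

/-- A schema is linear if no function symbol, predicate symbol or label occurs
    more than once in it. -/
def Schema.Linear (S : Schema) : Prop := S.syms.Nodup

/-- Π(S), the set of terminating paths through S. -/
inductive Paths : Schema → List Letter → Prop where
  | skip : Paths Schema.skip []
  | label (l : Label) : Paths (Schema.label l) [Letter.lab l]
  | assign (y : Var) (f : Fn) (xs : List Var) :
      Paths (Schema.assign y f xs) [Letter.asgn y f xs]
  | seq {S₁ S₂ w₁ w₂} : Paths S₁ w₁ → Paths S₂ w₂ → Paths (Schema.seq S₁ S₂) (w₁ ++ w₂)
  | iteTrue {p xs S₁ S₂ w} : Paths S₁ w →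
      Paths (Schema.ite p xs S₁ S₂) (Letter.pred p xs true :: w)
  | iteFalse {p xs S₁ S₂ w} : Paths S₂ w →
      Paths (Schema.ite p xs S₁ S₂) (Letter.pred p xs false :: w)
  | loopFalse (q : Pn) (xs : List Var) (T : Schema) :
      Paths (Schema.loop q xs T) [Letter.pred q xs false]
  | loopTrue {q xs T w ws} : Paths T w → Paths (Schema.loop q xs T) ws →
      Paths (Schema.loop q xs T) (Letter.pred q xs true :: (w ++ ws))

/-- ρ ∈ pre(Π(S)): ρ is a (finite) path through S.  (Every finite path through S,
    including every finite prefix of an infinite path, is a prefix of a terminating path.) -/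
def PathPrefix (S : Schema) (ρ : List Letter) : Prop := ∃ τ, Paths S τ ∧ ρ <+: τ

/-- `IsQuotient S' S`: S' is obtained from S by deleting zero or more statements. -/
inductive IsQuotient : Schema → Schema → Prop where
  | skip (S : Schema) : IsQuotient Schema.skip S
  | refl (S : Schema) : IsQuotient S S
  | seq {S₁' S₁ S₂' S₂} : IsQuotient S₁' S₁ → IsQuotient S₂' S₂ →
      IsQuotient (Schema.seq S₁' S₂') (Schema.seq S₁ S₂)
  | loop {q xs T' T} : IsQuotient T' T → IsQuotient (Schema.loop q xs T') (Schema.loop q xs T)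
  | ite {p xs T₁ S₁ T₂ S₂} : IsQuotient T₁ S₁ → IsQuotient T₂ S₂ →
      IsQuotient (Schema.ite p xs T₁ T₂) (Schema.ite p xs S₁ S₂)

/-- The symbol (function symbol, predicate symbol or label) of a letter. -/
def Letter.sym : Letter → Sym
  | .lab l => Sym.lab l
  | .asgn _ f _ => Sym.fn f
  | .pred p _ _ => Sym.pn p

/-- proj_{S'}(ρ): delete from ρ all letters whose function or predicate symbols,
    or labels, do not occur in S'. -/
def proj (S' : Schema) (ρ : List Letter) : List Letter :=
  ρ.filter (fun m => decide (m.sym ∈ S'.syms))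

/-- An interpretation over a domain D. -/
structure Interp (D : Type) where
  fn : Fn → List D → D
  pn : Pn → List D → Bool

/-- One execution step on (non-⊥) states; predicate letters and labels do not change the state. -/
def execLetter {D : Type} (i : Interp D) (d : Var → D) : Letter → (Var → D)
  | .asgn y f xs => Function.update d y (i.fn f (xs.map d))
  | _ => d

/-- M[schema(σ)]^i_d : the state after executing the assignments of the word σ from d. -/
def execWord {D : Type} (i : Interp D) (d : Var → D) (σ : List Letter) : Var → D :=
  σ.foldl (execLetter i) d

/-- ρ is consistent with (i,d): every predicate letter in ρ is evaluated by i in accordance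
    with the sequence of assignments preceding it. -/
def Consistent {D : Type} (i : Interp D) (d : Var → D) (ρ : List Letter) : Prop :=
  ∀ σ p xs Z, (σ ++ [Letter.pred p xs Z]) <+: ρ → i.pn p (xs.map (execWord i d σ)) = Z

/-- `ρ` is a finite prefix of the path π(S,i,d). -/
def PrefixOfPi {D : Type} (i : Interp D) (d : Var → D) (S : Schema) (ρ : List Letter) : Prop :=
  PathPrefix S ρ ∧ Consistent i d ρ

/-- The set of finite prefixes of π(S,i,d); this set determines the
    (possibly infinite) word π(S,i,d) uniquely. -/
def PiPrefixes {D : Type} (i : Interp D) (d : Var → D) (S : Schema) : Set (List Letter) :=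
  {ρ | PrefixOfPi i d S ρ}

open Classical in
/-- The final state M[S]^i_d; `none` represents ⊥ (non-termination). -/
noncomputable def finalState {D : Type} (i : Interp D) (d : Var → D) (S : Schema) :
    Option (Var → D) :=
  if h : ∃ ρ, Paths S ρ ∧ Consistent i d ρ then some (execWord i d h.choose) else none

/-- The Herbrand domain Term(F,V). -/
inductive Tm : Type where
  | var : Var → Tm
  | app : Fn → List Tm → Tm

/-- A Herbrand interpretation: function symbols act as term constructors. -/
def Interp.IsHerbrand (j : Interp Tm) : Prop := ∀ f ts, j.fn f ts = Tm.app f ts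

/-- The natural state e. -/
def natState : Var → Tm := Tm.var

/-- A fixed Herbrand interpretation (the predicate part is irrelevant for executing
    assignments). -/
def hInterp : Interp Tm := ⟨fun f ts => Tm.app f ts, fun _ _ => true⟩

/-- M[σ]_e : the Herbrand state after executing the assignments of σ from the natural state. -/
def hExec (σ : List Letter) : Var → Tm := execWord hInterp natState σ

/-- p(t) = Y is a consequence of μ. -/
def Consequence (μ : List Letter) (p : Pn) (ts : List Tm) (Y : Bool) : Prop :=
  ∃ μ' xs, (μ' ++ [Letter.pred p xs Y]) <+: μ ∧ xs.map (hExec μ') = ts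

/-- ρ is executable: ρ is a prefix of π(S,i,d) for some domain, interpretation and state. -/
def Executable (S : Schema) (ρ : List Letter) : Prop :=
  ∃ (D : Type) (i : Interp D) (d : Var → D), PrefixOfPi i d S ρ

/-- ρ (through S) and ρ' (through S') are compatible: for some domain, interpretation i
    and state d they are prefixes of π(S,i,d) and π(S',i,d) respectively. -/
def Compatible (S : Schema) (ρ : List Letter) (S' : Schema) (ρ' : List Letter) : Prop :=
  ∃ (D : Type) (i : Interp D) (d : Var → D), PrefixOfPi i d S ρ ∧ PrefixOfPi i d S' ρ'

/-- `Sub T S`: T occurs as a subschema of S. -/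
inductive Sub : Schema → Schema → Prop where
  | refl (S : Schema) : Sub S S
  | seqL {T S₁ S₂} : Sub T S₁ → Sub T (Schema.seq S₁ S₂)
  | seqR {T S₁ S₂} : Sub T S₂ → Sub T (Schema.seq S₁ S₂)
  | iteT {T p xs S₁ S₂} : Sub T S₁ → Sub T (Schema.ite p xs S₁ S₂)
  | iteF {T p xs S₁ S₂} : Sub T S₂ → Sub T (Schema.ite p xs S₁ S₂)
  | loop {T q xs B} : Sub T B → Sub T (Schema.loop q xs B)

/-- Simple l-reductions of paths through S. -/
inductive SimpleRed (S : Schema) (l : Label) : List Letter → List Letter → Prop where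
  | loopRed {p xs B σ α γ} :
      Sub (Schema.loop p xs B) S → Paths B σ → Sym.lab l ∉ B.syms →
      SimpleRed S l (α ++ [Letter.pred p xs true] ++ σ ++ [Letter.pred p xs false] ++ γ)
                    (α ++ [Letter.pred p xs false] ++ γ)
  | iteRed {p xs S₁ S₂ σ α γ} {Z : Bool} :
      Sub (Schema.ite p xs S₁ S₂) S → Paths (if Z then S₁ else S₂) σ →
      (if Z then S₂ else S₁) = Schema.skip →
      Sym.lab l ∉ S₁.syms → Sym.lab l ∉ S₂.syms →
      SimpleRed S l (α ++ [Letter.pred p xs Z] ++ σ ++ γ)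
                    (α ++ [Letter.pred p xs (!Z)] ++ γ)

/-- ρ is l-reducible to ρ': zero or more simple l-reductions. -/
def Reducible (S : Schema) (l : Label) : List Letter → List Letter → Prop :=
  Relation.ReflTransGen (SimpleRed S l)

/-- maxpre(σ,σ') : the maximal common prefix of two words. -/
def maxpre : List Letter → List Letter → List Letter
  | a :: as, b :: bs => if a = b then a :: maxpre as bs else []
  | _, _ => []

/-- The sequence of function and predicate symbols through which a path passes. -/
def symSeq (ρ : List Letter) : List Sym :=
  ρ.filterMap fun m => match m with
    | Letter.asgn _ f _ => some (Sym.fn f)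
    | Letter.pred p _ _ => some (Sym.pn p)
    | Letter.lab _ => none

/-- S' (a quotient of S containing l) is a (ρl,V)-path-faithful dynamic slice of S:
    (1) every variable of V defines the same term after proj_{S'}(ρ) as after ρ, and
    (2) every maximal path through S' compatible with ρ has proj_{S'}(ρ) as a prefix
        (equivalently: whenever ρ is a prefix of π(S,i,d), proj_{S'}(ρ) is a prefix
        of π(S',i,d)). -/
def IsPFDS (S : Schema) (ρ : List Letter) (l : Label) (V : Set Var) (S' : Schema) : Prop :=
  (∀ v ∈ V, hExec (proj S' ρ) v = hExec ρ v) ∧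
  ∀ (D : Type) (i : Interp D) (d : Var → D),
    PrefixOfPi i d S ρ → PrefixOfPi i d S' (proj S' ρ)

/-- S' (a quotient of S containing l) is a (ρl,V)-dynamic slice of S: every maximal path
    through S' compatible with ρ has a prefix ρ' to which proj_{S'}(ρ) is l-reducible and
    such that every variable of V defines the same term after ρ' as after ρ. -/
def IsDS (S : Schema) (ρ : List Letter) (l : Label) (V : Set Var) (S' : Schema) : Prop :=
  ∀ (D : Type) (i : Interp D) (d : Var → D), PrefixOfPi i d S ρ →
    ∃ ρ', PrefixOfPi i d S' ρ' ∧ Reducible S' l (proj S' ρ) ρ' ∧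
      ∀ v ∈ V, hExec ρ' v = hExec ρ v

/-- T' is a (ρ,V)-path-faithful dynamic end slice of T
    (S = T l with a label l at the end, S' = T' l). -/
def IsPFDSEnd (T : Schema) (ρ : List Letter) (V : Set Var) (T' : Schema) : Prop :=
  IsPFDS (Schema.seq T (Schema.label 0)) ρ 0 V (Schema.seq T' (Schema.label 0))

/-- T' is a (ρ,V)-dynamic end slice of T. -/
def IsDSEnd (T : Schema) (ρ : List Letter) (V : Set Var) (T' : Schema) : Prop :=
  IsDS (Schema.seq T (Schema.label 0)) ρ 0 V (Schema.seq T' (Schema.label 0))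

/-- The set of function and predicate symbols of a schema. -/
def fpsyms (T : Schema) : Set Sym := {s | s ∈ T.syms ∧ ∀ l : Label, s ≠ Sym.lab l}

/-- T is a minimal (ρ,V)-path-faithful dynamic end slice of S: it is a path-faithful
    dynamic end slice, and no quotient of S with a strictly smaller set of function and
    predicate symbols is a (ρ,V)-dynamic end slice of S. -/
def MinimalPFDSEnd (S : Schema) (ρ : List Letter) (V : Set Var) (T : Schema) : Prop :=
  IsPFDSEnd S ρ V T ∧
  ∀ T', IsQuotient T' S → fpsyms T' ⊂ fpsyms T → ¬ IsDSEnd S ρ V T'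

/-! Two terminating paths through a schema are either equal or part at a test ⟨p(x),Z⟩ that
they answer differently after a common prefix; paths consistent with the same state cannot
part that way. Hence the consistent terminating path is unique and contains every consistent
finite path, and a terminating path through `S₁S₂` splits as a path through `S₁` followed by
one through `S₂`, executed from the state that `S₁` reaches. -/

theorem _root_.List.prefix_append_cases {α : Type*} {l a b : List α} (h : l <+: a ++ b) :
    l <+: a ∨ ∃ l', l = a ++ l' ∧ l' <+: b := by
  rcases List.prefix_or_prefix_of_prefix h (List.prefix_append a b) with h' | ⟨l', rfl⟩
  · exact Or.inl h'
  · exact Or.inr ⟨l', rfl, (List.prefix_append_right_inj a).mp h⟩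

section

variable {D : Type} {i : Interp D} {d : Var → D} {S₁ S₂ : Schema}

theorem execWord_append (a b : List Letter) :
    execWord i d (a ++ b) = execWord i (execWord i d a) b :=
  List.foldl_append

theorem Consistent.of_prefix {ρ σ : List Letter} (hρ : Consistent i d ρ) (hσ : σ <+: ρ) :
    Consistent i d σ :=
  fun α p xs Z hα => hρ α p xs Z (hα.trans hσ)

theorem consistent_append {a b : List Letter} :
    Consistent i d (a ++ b) ↔ Consistent i d a ∧ Consistent i (execWord i d a) b := by
  refine ⟨fun h => ⟨h.of_prefix (List.prefix_append a b), fun α p xs Z hα => ?_⟩,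
    fun ⟨ha, hb⟩ α p xs Z hα => ?_⟩
  · rw [← execWord_append]
    exact h (a ++ α) p xs Z (by simpa using hα)
  · rcases List.prefix_append_cases hα with hα | ⟨l, hl, hlb⟩
    · exact ha α p xs Z hα
    · rcases List.eq_nil_or_concat l with rfl | ⟨β, m, rfl⟩
      · exact ha α p xs Z (by simp [hl])
      · obtain ⟨rfl, rfl⟩ : α = a ++ β ∧ Letter.pred p xs Z = m := by
          simpa [← List.append_assoc] using hl
        rw [execWord_append]
        exact hb β p xs Z (by simpa using hlb)

def Branches (ρ τ : List Letter) : Prop :=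
  ∃ α p xs Z, α ++ [Letter.pred p xs Z] <+: ρ ∧ α ++ [Letter.pred p xs (!Z)] <+: τ

theorem Branches.append_left (a : List Letter) {ρ τ : List Letter} (h : Branches ρ τ) :
    Branches (a ++ ρ) (a ++ τ) := by
  obtain ⟨α, p, xs, Z, hρ, hτ⟩ := h
  exact ⟨a ++ α, p, xs, Z, by simpa using hρ, by simpa using hτ⟩

theorem Branches.append_right {ρ τ : List Letter} (h : Branches ρ τ) (a b : List Letter) :
    Branches (ρ ++ a) (τ ++ b) := by
  obtain ⟨α, p, xs, Z, hρ, hτ⟩ := h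
  exact ⟨α, p, xs, Z, hρ.trans (List.prefix_append ρ a), hτ.trans (List.prefix_append τ b)⟩

theorem branches_pred_cons {p : Pn} {xs : List Var} {Z Z' : Bool} (hZ : Z ≠ Z')
    (ρ τ : List Letter) : Branches (Letter.pred p xs Z :: ρ) (Letter.pred p xs Z' :: τ) := by
  obtain rfl : Z' = !Z := Bool.eq_not.mpr hZ.symm
  exact ⟨[], p, xs, Z, by simp, by simp⟩

theorem eq_or_branches_append {ρ₁ ρ₂ τ₁ τ₂ : List Letter}
    (h₁ : ρ₁ = τ₁ ∨ Branches ρ₁ τ₁) (h₂ : ρ₂ = τ₂ ∨ Branches ρ₂ τ₂) :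
    ρ₁ ++ ρ₂ = τ₁ ++ τ₂ ∨ Branches (ρ₁ ++ ρ₂) (τ₁ ++ τ₂) := by
  rcases h₁ with rfl | h₁
  · exact h₂.imp (congrArg _) (Branches.append_left ρ₁)
  · exact Or.inr (h₁.append_right ρ₂ τ₂)

theorem eq_or_branches_pred_cons {p : Pn} {xs : List Var} {Z Z' : Bool} {ρ τ : List Letter}
    (h : ρ = τ ∨ Branches ρ τ) :
    Letter.pred p xs Z :: ρ = Letter.pred p xs Z' :: τ ∨
      Branches (Letter.pred p xs Z :: ρ) (Letter.pred p xs Z' :: τ) := by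
  by_cases hZ : Z = Z'
  · subst hZ
    exact h.imp (congrArg _) (Branches.append_left [_])
  · exact Or.inr (branches_pred_cons hZ ρ τ)

theorem Paths.eq_or_branches {S : Schema} {ρ τ : List Letter} (hρ : Paths S ρ)
    (hτ : Paths S τ) : ρ = τ ∨ Branches ρ τ := by
  induction hρ generalizing τ with
  | skip | label | assign => cases hτ; exact Or.inl rfl
  | seq _ _ ih₁ ih₂ =>
    cases hτ with
    | seq hτ₁ hτ₂ => exact eq_or_branches_append (ih₁ hτ₁) (ih₂ hτ₂)
  | iteTrue _ ih =>
    cases hτ with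
    | iteTrue hτ' => exact eq_or_branches_pred_cons (ih hτ')
    | iteFalse => exact Or.inr (branches_pred_cons (by simp) _ _)
  | iteFalse _ ih =>
    cases hτ with
    | iteTrue => exact Or.inr (branches_pred_cons (by simp) _ _)
    | iteFalse hτ' => exact eq_or_branches_pred_cons (ih hτ')
  | loopFalse =>
    cases hτ with
    | loopFalse => exact Or.inl rfl
    | loopTrue => exact Or.inr (branches_pred_cons (by simp) _ _)
  | loopTrue _ _ ih₁ ih₂ =>
    cases hτ with
    | loopFalse => exact Or.inr (branches_pred_cons (by simp) _ _)
    | loopTrue hτ₁ hτ₂ =>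
      exact eq_or_branches_pred_cons (eq_or_branches_append (ih₁ hτ₁) (ih₂ hτ₂))

theorem Consistent.not_branches {ρ τ : List Letter} (hρ : Consistent i d ρ)
    (hτ : Consistent i d τ) : ¬ Branches ρ τ := by
  rintro ⟨α, p, xs, Z, hαρ, hατ⟩
  exact (Bool.eq_not_self Z).mp ((hρ α p xs Z hαρ).symm.trans (hτ α p xs (!Z) hατ))

theorem Paths.eq_of_consistent {S : Schema} {ρ τ : List Letter} (hρ : Paths S ρ)
    (hτ : Paths S τ) (hcρ : Consistent i d ρ) (hcτ : Consistent i d τ) : ρ = τ :=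
  (hρ.eq_or_branches hτ).resolve_right (hcρ.not_branches hcτ)

theorem Paths.prefix_of_prefixOfPi {S : Schema} {ρ σ : List Letter} (hρ : Paths S ρ)
    (hcρ : Consistent i d ρ) (hσ : PrefixOfPi i d S σ) : σ <+: ρ := by
  obtain ⟨⟨τ, hτ, hστ⟩, hcσ⟩ := hσ
  rcases hρ.eq_or_branches hτ with rfl | ⟨α, p, xs, Z, hαρ, hατ⟩
  · exact hστ
  · have hσα : σ <+: α := by
      rcases List.prefix_or_prefix_of_prefix hστ hατ with hσ | hασ
      · rcases List.prefix_concat_iff.mp hσ with rfl | hσα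
        · exact absurd ⟨α, p, xs, Z, hαρ, List.prefix_rfl⟩ (hcρ.not_branches hcσ)
        · exact hσα
      · exact absurd ⟨α, p, xs, Z, hαρ, hασ⟩ (hcρ.not_branches hcσ)
    exact hσα.trans ((List.prefix_append α _).trans hαρ)

theorem finalState_eq_some {S : Schema} {ρ : List Letter} (hρ : Paths S ρ)
    (hc : Consistent i d ρ) : finalState i d S = some (execWord i d ρ) := by
  have h : ∃ ρ, Paths S ρ ∧ Consistent i d ρ := ⟨ρ, hρ, hc⟩
  rw [finalState, dif_pos h, h.choose_spec.1.eq_of_consistent hρ h.choose_spec.2 hc]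

theorem exists_paths : ∀ S : Schema, ∃ τ, Paths S τ
  | .skip => ⟨[], .skip⟩
  | .label l => ⟨_, .label l⟩
  | .assign y f xs => ⟨_, .assign y f xs⟩
  | .seq S₁ S₂ =>
    let ⟨_, h₁⟩ := exists_paths S₁
    let ⟨_, h₂⟩ := exists_paths S₂
    ⟨_, .seq h₁ h₂⟩
  | .ite _ _ S₁ _ =>
    let ⟨_, h⟩ := exists_paths S₁
    ⟨_, .iteTrue h⟩
  | .loop q xs T => ⟨_, .loopFalse q xs T⟩

theorem pathPrefix_seq_iff {σ : List Letter} :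
    PathPrefix (Schema.seq S₁ S₂) σ ↔
      PathPrefix S₁ σ ∨ ∃ τ₁ σ₂, Paths S₁ τ₁ ∧ PathPrefix S₂ σ₂ ∧ σ = τ₁ ++ σ₂ := by
  constructor
  · rintro ⟨_, hτ, hσ⟩
    cases hτ with | @seq _ _ τ₁ τ₂ hτ₁ hτ₂ => ?_
    rcases List.prefix_append_cases hσ with hσ | ⟨σ₂, rfl, hσ₂⟩
    · exact Or.inl ⟨τ₁, hτ₁, hσ⟩
    · exact Or.inr ⟨τ₁, σ₂, hτ₁, ⟨τ₂, hτ₂, hσ₂⟩, rfl⟩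
  · rintro (⟨τ₁, hτ₁, hσ⟩ | ⟨τ₁, σ₂, hτ₁, ⟨τ₂, hτ₂, hσ₂⟩, rfl⟩)
    · obtain ⟨τ₂, hτ₂⟩ := exists_paths S₂
      exact ⟨_, hτ₁.seq hτ₂, hσ.trans (List.prefix_append τ₁ τ₂)⟩
    · exact ⟨_, hτ₁.seq hτ₂, (List.prefix_append_right_inj τ₁).mpr hσ₂⟩

theorem paths_seq_consistent_iff {ρ₁ ρ : List Letter} (h₁ : Paths S₁ ρ₁)
    (hc₁ : Consistent i d ρ₁) :
    Paths (Schema.seq S₁ S₂) ρ ∧ Consistent i d ρ ↔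
      ∃ ρ₂, Paths S₂ ρ₂ ∧ Consistent i (execWord i d ρ₁) ρ₂ ∧ ρ = ρ₁ ++ ρ₂ := by
  constructor
  · rintro ⟨hρ, hc⟩
    cases hρ with | @seq _ _ τ₁ ρ₂ hτ₁ hρ₂ => ?_
    rw [consistent_append] at hc
    obtain rfl := hτ₁.eq_of_consistent h₁ hc.1 hc₁
    exact ⟨ρ₂, hρ₂, hc.2, rfl⟩
  · rintro ⟨ρ₂, hρ₂, hc₂, rfl⟩
    exact ⟨h₁.seq hρ₂, consistent_append.mpr ⟨hc₁, hc₂⟩⟩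

theorem finalState_seq {ρ₁ : List Letter} (h₁ : Paths S₁ ρ₁) (hc₁ : Consistent i d ρ₁) :
    finalState i d (Schema.seq S₁ S₂) = finalState i (execWord i d ρ₁) S₂ := by
  by_cases h₂ : ∃ ρ₂, Paths S₂ ρ₂ ∧ Consistent i (execWord i d ρ₁) ρ₂
  · obtain ⟨ρ₂, hρ₂, hc₂⟩ := h₂
    obtain ⟨hρ, hc⟩ := (paths_seq_consistent_iff h₁ hc₁).mpr ⟨ρ₂, hρ₂, hc₂, rfl⟩
    rw [finalState_eq_some hρ hc, finalState_eq_some hρ₂ hc₂, execWord_append]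
  · have h : ¬ ∃ ρ, Paths (Schema.seq S₁ S₂) ρ ∧ Consistent i d ρ := by
      rintro ⟨ρ, hρ⟩
      obtain ⟨ρ₂, hρ₂, hc₂, -⟩ := (paths_seq_consistent_iff h₁ hc₁).mp hρ
      exact h₂ ⟨ρ₂, hρ₂, hc₂⟩
    rw [finalState, dif_neg h, finalState, dif_neg h₂]

theorem finalState_seq_of_not_exists (h₁ : ¬ ∃ ρ₁, Paths S₁ ρ₁ ∧ Consistent i d ρ₁) :
    finalState i d (Schema.seq S₁ S₂) = none := by
  refine dif_neg ?_
  rintro ⟨_, hρ, hc⟩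
  cases hρ with | @seq _ _ ρ₁ _ hρ₁ _ => ?_
  exact h₁ ⟨ρ₁, hρ₁, (consistent_append.mp hc).1⟩

theorem piPrefixes_seq {ρ₁ : List Letter} (h₁ : Paths S₁ ρ₁) (hc₁ : Consistent i d ρ₁) :
    PiPrefixes i d (Schema.seq S₁ S₂) =
      {σ | σ <+: ρ₁} ∪ (fun τ => ρ₁ ++ τ) '' PiPrefixes i (execWord i d ρ₁) S₂ := by
  ext σ
  simp only [PiPrefixes, PrefixOfPi, Set.mem_union, Set.mem_image, Set.mem_ofPred_eq,
    pathPrefix_seq_iff]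
  constructor
  · rintro ⟨hσ | ⟨τ₁, σ₂, hτ₁, hσ₂, rfl⟩, hc⟩
    · exact Or.inl (h₁.prefix_of_prefixOfPi hc₁ ⟨hσ, hc⟩)
    · rw [consistent_append] at hc
      obtain rfl := hτ₁.eq_of_consistent h₁ hc.1 hc₁
      exact Or.inr ⟨σ₂, ⟨hσ₂, hc.2⟩, rfl⟩
  · rintro (hσ | ⟨σ₂, ⟨hσ₂, hc₂⟩, rfl⟩)
    · exact ⟨Or.inl ⟨ρ₁, h₁, hσ⟩, hc₁.of_prefix hσ⟩
    · exact ⟨Or.inr ⟨ρ₁, σ₂, h₁, hσ₂, rfl⟩, consistent_append.mpr ⟨hc₁, hc₂⟩⟩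

theorem piPrefixes_seq_of_not_exists (h₁ : ¬ ∃ ρ₁, Paths S₁ ρ₁ ∧ Consistent i d ρ₁) :
    PiPrefixes i d (Schema.seq S₁ S₂) = PiPrefixes i d S₁ := by
  ext σ
  simp only [PiPrefixes, PrefixOfPi, Set.mem_ofPred_eq, pathPrefix_seq_iff]
  refine ⟨?_, fun ⟨hσ, hc⟩ => ⟨Or.inl hσ, hc⟩⟩
  rintro ⟨hσ | ⟨τ₁, σ₂, hτ₁, -, rfl⟩, hc⟩
  · exact ⟨hσ, hc⟩
  · exact absurd ⟨τ₁, hτ₁, (consistent_append.mp hc).1⟩ h₁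

end

/-- for all schemas S₁, S₂, every interpretation i and state d ≠ ⊥:
    if M[S₁]^i_d ≠ ⊥ (i.e. π(S₁,i,d) is a terminating consistent path ρ₁, and then
    M[S₁]^i_d is the state reached after ρ₁), then M[S₁S₂]^i_d = M[S₂]^i_{M[S₁]^i_d} and
    π(S₁S₂,i,d) = π(S₁,i,d)·π(S₂,i,M[S₁]^i_d) (equality of paths expressed via their sets
    of finite prefixes); and if M[S₁]^i_d = ⊥ then M[S₁S₂]^i_d = ⊥ and
    π(S₁S₂,i,d) = π(S₁,i,d). -/
theorem statement_3 {D : Type} (i : Interp D) (d : Var → D) (S₁ S₂ : Schema) :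
    (∀ ρ₁, Paths S₁ ρ₁ → Consistent i d ρ₁ →
      finalState i d (Schema.seq S₁ S₂) = finalState i (execWord i d ρ₁) S₂ ∧
      PiPrefixes i d (Schema.seq S₁ S₂) =
        {σ | σ <+: ρ₁} ∪ (fun τ => ρ₁ ++ τ) '' PiPrefixes i (execWord i d ρ₁) S₂) ∧
    ((¬ ∃ ρ₁, Paths S₁ ρ₁ ∧ Consistent i d ρ₁) →
      finalState i d (Schema.seq S₁ S₂) = none ∧
      PiPrefixes i d (Schema.seq S₁ S₂) = PiPrefixes i d S₁) :=
  ⟨fun _ h₁ hc₁ => ⟨finalState_seq h₁ hc₁, piPrefixes_seq h₁ hc₁⟩,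
    fun h₁ => ⟨finalState_seq_of_not_exists h₁, piPrefixes_seq_of_not_exists h₁⟩⟩

end SchemaSlicing
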